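/- Let M ∈ L^∞(0,T; ℝ^{ℓ'×d}) and 𝒦 ∈ L²((0,T)²; ℝ^{ℓ'×d}). Suppose that for every x ∈ L²(0,T; ℝ^d), M(t)x(t) + ∫₀ᵀ 𝒦(t,θ)x(θ) dθ = 0 for a.e. t ∈ (0,T). Then M(t) = 0 for a.e. t ∈ (0,T). -/

import Mathlib

open MeasureTheory Set Matrix
open scoped ENNReal

attribute [local instance] Matrix.frobeniusNormedAddCommGroup

/-!
Test the identity against `x = 𝟙_(0,q] eⱼ` for every rational `q` and every `j`: for a.e. `t`,
simultaneously in `q`, `𝟙_{t ≤ q} M(t) eⱼ + ∫_(0,q] 𝒦(t,θ) eⱼ dθ = 0`. By Fubini, a.e. slice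
`𝒦(t,·)` is in `L² ⊆ L¹` of the bounded interval, so the primitive `q ↦ ∫_(0,q] 𝒦(t,θ) eⱼ dθ` is
continuous. It vanishes at the rationals `q < t` and equals `-M(t) eⱼ` at the rationals `q > t`,
so both values are its value at `t`, and `M(t) eⱼ = 0`.
-/

namespace Matrix

theorem norm_col_le_frobenius_norm {m n α : Type*} [Fintype m] [Fintype n]
    [NormedAddCommGroup α] (A : Matrix m n α) (j : n) : ‖A.col j‖ ≤ ‖A‖ := by
  refine pi_norm_le_iff_of_nonneg (norm_nonneg _) |>.2 fun i => ?_
  change ‖A i j‖ ≤ ‖WithLp.toLp 2 fun i => WithLp.toLp 2 (A i)‖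
  exact (PiLp.norm_apply_le (WithLp.toLp 2 (A i)) j).trans
    (PiLp.norm_apply_le (WithLp.toLp 2 fun i => WithLp.toLp 2 (A i)) i)

theorem mulVec_indicator_const {α m n R : Type*} [Fintype n] [NonUnitalNonAssocSemiring R]
    (K : α → Matrix m n R) (s : Set α) (v : n → R) (x : α) :
    K x *ᵥ s.indicator (fun _ => v) x = s.indicator (fun y => K y *ᵥ v) x := by
  by_cases hx : x ∈ s <;> simp [hx]

end Matrix

theorem ae_integrable_prod_right_of_lintegral_sq_lt_top {α β E : Type*}
    [MeasurableSpace α] [MeasurableSpace β] [NormedAddCommGroup E]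
    {μ : Measure α} {ν : Measure β} [IsFiniteMeasure μ] [IsFiniteMeasure ν]
    {F : α × β → E} (hF : AEStronglyMeasurable F (μ.prod ν))
    (hF2 : ∫⁻ p, ‖F p‖ₑ ^ 2 ∂(μ.prod ν) < ∞) :
    ∀ᵐ a ∂μ, Integrable (fun b => F (a, b)) ν := by
  have hL2 : MemLp F 2 (μ.prod ν) :=
    ⟨hF, (eLpNorm_lt_top_iff_lintegral_rpow_enorm_lt_top two_ne_zero ENNReal.ofNat_ne_top).2
      (by simpa using hF2)⟩
  exact (hL2.integrable one_le_two).prod_right_ae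

theorem eq_of_continuousWithinAt_of_forall_rat {X : Type*} [TopologicalSpace X] [T1Space X]
    {G : ℝ → X} {s : Set ℝ} {t : ℝ} {c : X} (hs : IsOpen s) (ht : t ∈ closure s)
    (hG : ContinuousWithinAt G s t) (h : ∀ q : ℚ, (q : ℝ) ∈ s → G q = c) : G t = c := by
  have ht_rat : t ∈ closure (s ∩ range ((↑) : ℚ → ℝ)) :=
    closure_minimal (Rat.denseRange_cast.open_subset_closure_inter hs) isClosed_closure ht
  have himage : G '' (s ∩ range ((↑) : ℚ → ℝ)) ⊆ {c} := by
    rintro _ ⟨_, ⟨hq, q, rfl⟩, rfl⟩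
    exact h q hq
  simpa using closure_mono himage ((hG.mono inter_subset_left).mem_closure_image ht_rat)

theorem eq_zero_of_forall_rat_indicator_add_setIntegral_eq_zero {E : Type*}
    [NormedAddCommGroup E] [NormedSpace ℝ E] {f : ℝ → E} {c : E} {a b t : ℝ}
    (hf : IntegrableOn f (Ioo a b)) (ht : t ∈ Ioo a b)
    (h : ∀ q : ℚ, (q : ℝ) ∈ Ioo a b →
      (Ioc a q).indicator (fun _ => c) t + ∫ θ in Ioc a q, f θ = 0) : c = 0 := by
  set G : ℝ → E := fun s => ∫ θ in Ioc a s, f θ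
  have hG : ContinuousWithinAt G (Icc a b) t :=
    intervalIntegral.continuousOn_primitive
      ((integrableOn_Icc_iff_integrableOn_Ioo (a := a) (b := b)).2 hf) t (Ioo_subset_Icc_self ht)
  have hleft : G t = 0 := by
    refine eq_of_continuousWithinAt_of_forall_rat isOpen_Ioo ?_
      (hG.mono (Ioo_subset_Icc_self.trans (Icc_subset_Icc_right ht.2.le))) fun q hq => ?_
    · rw [closure_Ioo ht.1.ne]; exact right_mem_Icc.2 ht.1.le
    · simpa [hq.2.not_ge] using h q ⟨hq.1, hq.2.trans ht.2⟩
  have hright : G t = -c := by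
    refine eq_of_continuousWithinAt_of_forall_rat isOpen_Ioo ?_
      (hG.mono (Ioo_subset_Icc_self.trans (Icc_subset_Icc_left ht.1.le))) fun q hq => ?_
    · rw [closure_Ioo ht.2.ne]; exact left_mem_Icc.2 ht.2.le
    · simpa [ht.1, hq.1.le, eq_neg_iff_add_eq_zero, add_comm] using h q ⟨ht.1.trans hq.1, hq.2⟩
  simpa using hleft.symm.trans hright

theorem ae_integrableOn_mulVec_single_of_lintegral_sq_lt_top {α m n : Type*} [MeasureSpace α]
    [SFinite (volume : Measure α)] [Fintype m] [Fintype n] [DecidableEq n]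
    {s : Set α} (hs : volume s ≠ ∞) {K : α → α → Matrix m n ℝ}
    (hK : Measurable fun (p : α × α) (i : m) (j : n) => K p.1 p.2 i j)
    (hK2 : ∫⁻ p in s ×ˢ s, (‖K p.1 p.2‖₊ : ℝ≥0∞) ^ 2 < ⊤) (j : n) :
    ∀ᵐ t ∂(volume.restrict s), IntegrableOn (fun θ => K t θ *ᵥ Pi.single j 1) s := by
  have : IsFiniteMeasure (volume.restrict s) := isFiniteMeasure_restrict.2 hs
  simp only [mulVec_single_one]
  refine ae_integrable_prod_right_of_lintegral_sq_lt_top (F := fun p => (K p.1 p.2).col j)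
    (measurable_pi_lambda _ fun i => (hK.eval (a := i)).eval (a := j)).aestronglyMeasurable ?_
  rw [Measure.prod_restrict, ← Measure.volume_eq_prod]
  refine lt_of_le_of_lt (lintegral_mono fun p => ?_) hK2
  rw [← enorm_eq_nnnorm]
  gcongr
  exact enorm_le_iff_norm_le.2 (norm_col_le_frobenius_norm _ _)

theorem integrable_indicator_const_dotProduct_self {α n : Type*} [MeasurableSpace α] [Fintype n]
    {μ : Measure α} [IsFiniteMeasure μ] {s : Set α} (hs : MeasurableSet s) (v : n → ℝ) :
    Integrable (fun x => s.indicator (fun _ => v) x ⬝ᵥ s.indicator (fun _ => v) x) μ := by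
  have : (fun x => s.indicator (fun _ => v) x ⬝ᵥ s.indicator (fun _ => v) x) =
      s.indicator fun _ => v ⬝ᵥ v := by
    funext x; by_cases hx : x ∈ s <;> simp [hx]
  rw [this]
  exact (integrable_const _).indicator hs

theorem stmt11_general {d ℓ' : ℕ} (T : ℝ)
    (M : ℝ → Matrix (Fin ℓ') (Fin d) ℝ)
    (𝒦 : ℝ → ℝ → Matrix (Fin ℓ') (Fin d) ℝ)
    (h𝒦meas : Measurable fun (p : ℝ × ℝ) (i : Fin ℓ') (j : Fin d) => 𝒦 p.1 p.2 i j)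
    (h𝒦L2 : ∫⁻ p in (Ioo 0 T) ×ˢ (Ioo 0 T), (‖𝒦 p.1 p.2‖₊ : ℝ≥0∞) ^ 2 < ⊤)
    (hzero : ∀ x : ℝ → Fin d → ℝ, Measurable x →
      Integrable (fun t => x t ⬝ᵥ x t) (volume.restrict (Ioo 0 T)) →
      ∀ᵐ t ∂(volume.restrict (Ioo 0 T)),
        (M t).mulVec (x t) + (∫ θ in Ioo 0 T, (𝒦 t θ).mulVec (x θ)) = 0) :
    ∀ᵐ t ∂(volume.restrict (Ioo 0 T)), M t = 0 := by
  have hslices := ae_all_iff.2 <|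
    ae_integrableOn_mulVec_single_of_lintegral_sq_lt_top (by simp) h𝒦meas h𝒦L2
  have htests := ae_all_iff.2 fun j : Fin d => ae_all_iff.2 fun q : ℚ =>
    hzero ((Ioc 0 (q : ℝ)).indicator fun _ => Pi.single j 1)
      (measurable_const.indicator measurableSet_Ioc)
      (integrable_indicator_const_dotProduct_self measurableSet_Ioc _)
  filter_upwards [ae_restrict_mem measurableSet_Ioo, hslices, htests] with t ht hslice htest
  ext i j
  have hcol : M t *ᵥ Pi.single j 1 = 0 := by
    refine eq_zero_of_forall_rat_indicator_add_setIntegral_eq_zero (hslice j) ht fun q hq => ?_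
    have := htest j q
    simp only [mulVec_indicator_const] at this
    rwa [setIntegral_indicator measurableSet_Ioc,
      inter_eq_right.2 (Ioc_subset_Ioo_right hq.2)] at this
  simpa using congrFun hcol i

/-- If the multiplication operator by `M ∈ L^∞(0,T;ℝ^{ℓ'×d})` plus the integral operator
with kernel `𝒦 ∈ L²((0,T)²;ℝ^{ℓ'×d})` vanishes identically on `L²(0,T;ℝ^d)`, then
`M(t) = 0` for a.e. `t ∈ (0,T)`. -/
theorem stmt11 {d ℓ' : ℕ} (T : ℝ) (hT : 0 < T)
    (M : ℝ → Matrix (Fin ℓ') (Fin d) ℝ)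
    (𝒦 : ℝ → ℝ → Matrix (Fin ℓ') (Fin d) ℝ)
    (hMmeas : Measurable fun t (i : Fin ℓ') (j : Fin d) => M t i j)
    (hMbdd : ∃ C : ℝ, ∀ᵐ t ∂(volume.restrict (Ioo 0 T)), ‖M t‖ ≤ C)
    (h𝒦meas : Measurable fun (p : ℝ × ℝ) (i : Fin ℓ') (j : Fin d) => 𝒦 p.1 p.2 i j)
    (h𝒦L2 : ∫⁻ p in (Ioo 0 T) ×ˢ (Ioo 0 T), (‖𝒦 p.1 p.2‖₊ : ℝ≥0∞) ^ 2 < ⊤)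
    (hzero : ∀ x : ℝ → Fin d → ℝ, Measurable x →
      Integrable (fun t => x t ⬝ᵥ x t) (volume.restrict (Ioo 0 T)) →
      ∀ᵐ t ∂(volume.restrict (Ioo 0 T)),
        (M t).mulVec (x t) + (∫ θ in Ioo 0 T, (𝒦 t θ).mulVec (x θ)) = 0) :
    ∀ᵐ t ∂(volume.restrict (Ioo 0 T)), M t = 0 :=
  stmt11_general T M 𝒦 h𝒦meas h𝒦L2 hzero
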